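/- Let u¹, u² ∈ ℝ^{NM} be grid functions, ε > 0, and suppose c ≥ 0 satisfies, for every vector grid function W: |(u¹∘𝔡_x W − 𝔡_x(u¹∘W), W)_𝐏| ≤ c‖W‖_𝐏², |(u²∘𝔡_y W − 𝔡_y(u²∘W), W)_𝐏| ≤ c‖W‖_𝐏², and |(W, C(W))_𝐏| ≤ c‖W‖_𝐏². Suppose the penalty entries satisfy: for all j, (σ_𝓡)_{(N−1,j)} ≤ min(u¹_{(N−1,j)},0)/2 and (σ_𝓛)_{(0,j)} ≤ −max(u¹_{(0,j)},0)/2; for all i, (σ_𝓤)_{(i,M−1)} ≤ min(u²_{(i,M−1)},0)/2 and (σ_𝓓)_{(i,0)} ≤ −max(u²_{(i,0)},0)/2; and all other diagonal entries of the four Σ matrices are zero. If V : [0,∞) → ℝ^{NM} × ℝ^{NM} is differentiable and satisfies V'(t) = −u¹∘𝔡_x V(t) − u²∘𝔡_y V(t) + C(V(t)) − ε curl²(V(t)) + 𝓑 V(t) + ε·( (𝓤−𝓓)(I_N⊗P_y⁻¹) curl(V(t)), −(𝓡−𝓛)(P_x⁻¹⊗I_M) curl(V(t)) ) for all t ≥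 0, then for every t ≥ 0: ‖V(t)‖_𝐏² + ε ∫₀ᵗ e^{4c(t−s)} ‖curl(V(s))‖_𝐏² ds ≤ e^{4ct} ‖V(0)‖_𝐏². -/

import Mathlib

open Matrix Kronecker

noncomputable section

/-- Scalar grid functions on the `N × M` grid. -/
abbrev Grid (N M : ℕ) := Fin N × Fin M → ℝ

/-- Vector grid functions `V = (V¹, V²)`. -/
abbrev VGrid (N M : ℕ) := Grid N M × Grid N M

/-- `R_N = diag(0,…,0,1)`. -/
def RmatN (N : ℕ) : Matrix (Fin N) (Fin N) ℝ :=
  Matrix.diagonal (fun i => if (i : ℕ) = N - 1 then 1 else 0)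

/-- `L_N = diag(1,0,…,0)`. -/
def LmatN (N : ℕ) : Matrix (Fin N) (Fin N) ℝ :=
  Matrix.diagonal (fun i => if (i : ℕ) = 0 then 1 else 0)

/-- `𝓡 = R_N ⊗ I_M`. -/
def calR (N M : ℕ) : Matrix (Fin N × Fin M) (Fin N × Fin M) ℝ :=
  RmatN N ⊗ₖ (1 : Matrix (Fin M) (Fin M) ℝ)

/-- `𝓛 = L_N ⊗ I_M`. -/
def calL (N M : ℕ) : Matrix (Fin N × Fin M) (Fin N × Fin M) ℝ :=
  LmatN N ⊗ₖ (1 : Matrix (Fin M) (Fin M) ℝ)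

/-- `𝓤 = I_N ⊗ R_M`. -/
def calU (N M : ℕ) : Matrix (Fin N × Fin M) (Fin N × Fin M) ℝ :=
  (1 : Matrix (Fin N) (Fin N) ℝ) ⊗ₖ RmatN M

/-- `𝓓 = I_N ⊗ L_M`. -/
def calD (N M : ℕ) : Matrix (Fin N × Fin M) (Fin N × Fin M) ℝ :=
  (1 : Matrix (Fin N) (Fin N) ℝ) ⊗ₖ LmatN M

variable {N M : ℕ} (px : Fin N → ℝ) (py : Fin M → ℝ)
variable (Qx : Matrix (Fin N) (Fin N) ℝ) (Qy : Matrix (Fin M) (Fin M) ℝ)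

/-- `𝔡_x = (P_x⁻¹ Q_x) ⊗ I_M`. -/
def dgx : Matrix (Fin N × Fin M) (Fin N × Fin M) ℝ :=
  ((Matrix.diagonal px)⁻¹ * Qx) ⊗ₖ (1 : Matrix (Fin M) (Fin M) ℝ)

/-- `𝔡_y = I_N ⊗ (P_y⁻¹ Q_y)`. -/
def dgy : Matrix (Fin N × Fin M) (Fin N × Fin M) ℝ :=
  (1 : Matrix (Fin N) (Fin N) ℝ) ⊗ₖ ((Matrix.diagonal py)⁻¹ * Qy)

/-- `𝐏 = P_x ⊗ P_y`. -/
def Pmat : Matrix (Fin N × Fin M) (Fin N × Fin M) ℝ :=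
  Matrix.diagonal px ⊗ₖ Matrix.diagonal py

/-- The scalar inner product `(v,w)_𝐏 = vᵀ𝐏w`. -/
def ip (v w : Grid N M) : ℝ := v ⬝ᵥ (Pmat px py).mulVec w

/-- The vector inner product `(V,W)_𝐏 = (V¹,W¹)_𝐏 + (V²,W²)_𝐏`. -/
def vip (V W : VGrid N M) : ℝ := ip px py V.1 W.1 + ip px py V.2 W.2

/-- Discrete curl: `curl(V) = 𝔡_x V² − 𝔡_y V¹`. -/
def curlOp (V : VGrid N M) : Grid N M :=
  (dgx px Qx).mulVec V.2 - (dgy py Qy).mulVec V.1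

/-- Discrete curl-curl: `curl²(V) = (−𝔡_y𝔡_y V¹ + 𝔡_x𝔡_y V², 𝔡_x𝔡_y V¹ − 𝔡_x𝔡_x V²)`. -/
def curl2Op (V : VGrid N M) : VGrid N M :=
  (-(dgy py Qy).mulVec ((dgy py Qy).mulVec V.1)
      + (dgx px Qx).mulVec ((dgy py Qy).mulVec V.2),
   (dgx px Qx).mulVec ((dgy py Qy).mulVec V.1)
      - (dgx px Qx).mulVec ((dgx px Qx).mulVec V.2))

variable (u1 u2 : Grid N M)

/-- The zeroth-order coupling term
`C(W) = (−(𝔡_y u²)∘W¹ + (𝔡_y u¹)∘W², (𝔡_x u²)∘W¹ − (𝔡_x u¹)∘W²)`. -/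
def Cop (W : VGrid N M) : VGrid N M :=
  (fun k => -((dgy py Qy).mulVec u2 k) * W.1 k + (dgy py Qy).mulVec u1 k * W.2 k,
   fun k => (dgx px Qx).mulVec u2 k * W.1 k - (dgx px Qx).mulVec u1 k * W.2 k)

/-- The penalty operator
`𝓑 = (P_x⁻¹⊗I_M)(Σ_𝓛𝓛 + Σ_𝓡𝓡) + (I_N⊗P_y⁻¹)(Σ_𝓓𝓓 + Σ_𝓤𝓤)`. -/
def Bmat (sL sR sD sU : Grid N M) : Matrix (Fin N × Fin M) (Fin N × Fin M) ℝ :=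
  ((Matrix.diagonal px)⁻¹ ⊗ₖ (1 : Matrix (Fin M) (Fin M) ℝ)) *
      (Matrix.diagonal sL * calL N M + Matrix.diagonal sR * calR N M)
  + ((1 : Matrix (Fin N) (Fin N) ℝ) ⊗ₖ (Matrix.diagonal py)⁻¹) *
      (Matrix.diagonal sD * calD N M + Matrix.diagonal sU * calU N M)

/-- Right-hand side of the SBP-SAT scheme with mixed boundary conditions:
`−u¹∘𝔡_xW − u²∘𝔡_yW + C(W) − ε curl²(W) + 𝓑W + ε((𝓤−𝓓)(I_N⊗P_y⁻¹)curl W, −(𝓡−𝓛)(P_x⁻¹⊗I_M)curl W)`. -/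
def rhsMixed (ε : ℝ) (sL sR sD sU : Grid N M) (W : VGrid N M) : VGrid N M :=
  (fun k => -(u1 k * (dgx px Qx).mulVec W.1 k) - u2 k * (dgy py Qy).mulVec W.1 k
      + (Cop px py Qx Qy u1 u2 W).1 k - ε * (curl2Op px py Qx Qy W).1 k
      + (Bmat px py sL sR sD sU).mulVec W.1 k
      + ε * ((calU N M - calD N M)
              * ((1 : Matrix (Fin N) (Fin N) ℝ) ⊗ₖ (Matrix.diagonal py)⁻¹)).mulVec
              (curlOp px py Qx Qy W) k,
   fun k => -(u1 k * (dgx px Qx).mulVec W.2 k) - u2 k * (dgy py Qy).mulVec W.2 k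
      + (Cop px py Qx Qy u1 u2 W).2 k - ε * (curl2Op px py Qx Qy W).2 k
      + (Bmat px py sL sR sD sU).mulVec W.2 k
      - ε * ((calR N M - calL N M)
              * ((Matrix.diagonal px)⁻¹ ⊗ₖ (1 : Matrix (Fin M) (Fin M) ℝ))).mulVec
              (curlOp px py Qx Qy W) k)

section AuxLemmas

variable {N M : ℕ}

/-- boundary weight `r − l` at an index. -/
def rlw (n : ℕ) (i : Fin n) : ℝ :=
  (if (i : ℕ) = n - 1 then 1 else 0) - (if (i : ℕ) = 0 then 1 else 0)

lemma Pmat_eq (px : Fin N → ℝ) (py : Fin M → ℝ) :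
    Pmat px py = Matrix.diagonal (fun k : Fin N × Fin M => px k.1 * py k.2) := by
  simp [Pmat, Matrix.diagonal_kronecker_diagonal]

lemma ip_sum (px : Fin N → ℝ) (py : Fin M → ℝ) (v w : Grid N M) :
    ip px py v w = ∑ k : Fin N × Fin M, px k.1 * py k.2 * (v k * w k) := by
  simp only [ip, Pmat_eq, Matrix.mulVec_diagonal, dotProduct]
  exact Finset.sum_congr rfl fun k _ => by ring

lemma dot_diag_sum (d : Fin N × Fin M → ℝ) (v w : Grid N M) :
    v ⬝ᵥ (Matrix.diagonal d).mulVec w = ∑ k : Fin N × Fin M, d k * (v k * w k) := by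
  simp only [Matrix.mulVec_diagonal, dotProduct]
  exact Finset.sum_congr rfl fun k _ => by ring

lemma ip_mulVec (px : Fin N → ℝ) (py : Fin M → ℝ)
    (A : Matrix (Fin N × Fin M) (Fin N × Fin M) ℝ) (v w : Grid N M) :
    ip px py v (A.mulVec w) = v ⬝ᵥ ((Pmat px py * A).mulVec w) := by
  simp [ip, Matrix.mulVec_mulVec]

lemma diag_inv_eq {n : ℕ} (d : Fin n → ℝ) (hd : ∀ i, 0 < d i) :
    (Matrix.diagonal d)⁻¹ = Matrix.diagonal (fun i => (d i)⁻¹) := by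
  apply Matrix.inv_eq_right_inv
  rw [Matrix.diagonal_mul_diagonal]
  have : (fun i => d i * (d i)⁻¹) = fun _ => (1:ℝ) := funext fun i => mul_inv_cancel₀ (hd i).ne'
  rw [this, Matrix.diagonal_one]

lemma diag_mul_inv_self {n : ℕ} (d : Fin n → ℝ) (hd : ∀ i, 0 < d i) :
    Matrix.diagonal d * (Matrix.diagonal d)⁻¹ = 1 := by
  rw [diag_inv_eq d hd, Matrix.diagonal_mul_diagonal]
  have : (fun i => d i * (d i)⁻¹) = fun _ => (1:ℝ) := funext fun i => mul_inv_cancel₀ (hd i).ne'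
  rw [this, Matrix.diagonal_one]

lemma Pdgx_eq (px : Fin N → ℝ) (hpx : ∀ i, 0 < px i) (py : Fin M → ℝ)
    (Qx : Matrix (Fin N) (Fin N) ℝ) :
    Pmat px py * dgx px Qx = Qx ⊗ₖ Matrix.diagonal py := by
  unfold Pmat dgx
  rw [← Matrix.mul_kronecker_mul, ← Matrix.mul_assoc, diag_mul_inv_self px hpx,
    Matrix.one_mul, Matrix.mul_one]

lemma Pdgy_eq (px : Fin N → ℝ) (py : Fin M → ℝ) (hpy : ∀ j, 0 < py j)
    (Qy : Matrix (Fin M) (Fin M) ℝ) :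
    Pmat px py * dgy py Qy = Matrix.diagonal px ⊗ₖ Qy := by
  unfold Pmat dgy
  rw [← Matrix.mul_kronecker_mul, ← Matrix.mul_assoc, diag_mul_inv_self py hpy,
    Matrix.one_mul, Matrix.mul_one]

end AuxLemmas

section AuxLemmas2

variable {N M : ℕ}

lemma sbp_x (px : Fin N → ℝ) (hpx : ∀ i, 0 < px i) (py : Fin M → ℝ)
    (Qx : Matrix (Fin N) (Fin N) ℝ) (hQx : Qx + Qxᵀ = RmatN N - LmatN N)
    (v w : Grid N M) :
    ip px py v ((dgx px Qx).mulVec w) + ip px py w ((dgx px Qx).mulVec v)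
      = ∑ k : Fin N × Fin M, py k.2 * rlw N k.1 * (v k * w k) := by
  rw [ip_mulVec, ip_mulVec, Pdgx_eq px hpx py Qx]
  have h2 : w ⬝ᵥ (Qx ⊗ₖ Matrix.diagonal py).mulVec v
      = v ⬝ᵥ ((Qxᵀ ⊗ₖ Matrix.diagonal py).mulVec w) := by
    rw [Matrix.dotProduct_mulVec, dotProduct_comm]
    rw [← Matrix.mulVec_transpose]
    congr 1
    rw [← Matrix.kroneckerMap_transpose, Matrix.diagonal_transpose]
  rw [h2, ← dotProduct_add, ← Matrix.add_mulVec, ← Matrix.add_kronecker, hQx]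
  have h3 : RmatN N - LmatN N = Matrix.diagonal (fun i => rlw N i) := by
    unfold RmatN LmatN rlw
    rw [Matrix.diagonal_sub]
  rw [h3, Matrix.diagonal_kronecker_diagonal, dot_diag_sum]
  exact Finset.sum_congr rfl fun k _ => by ring

lemma sbp_y (px : Fin N → ℝ) (py : Fin M → ℝ) (hpy : ∀ j, 0 < py j)
    (Qy : Matrix (Fin M) (Fin M) ℝ) (hQy : Qy + Qyᵀ = RmatN M - LmatN M)
    (v w : Grid N M) :
    ip px py v ((dgy py Qy).mulVec w) + ip px py w ((dgy py Qy).mulVec v)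
      = ∑ k : Fin N × Fin M, px k.1 * rlw M k.2 * (v k * w k) := by
  rw [ip_mulVec, ip_mulVec, Pdgy_eq px py hpy Qy]
  have h2 : w ⬝ᵥ (Matrix.diagonal px ⊗ₖ Qy).mulVec v
      = v ⬝ᵥ ((Matrix.diagonal px ⊗ₖ Qyᵀ).mulVec w) := by
    rw [Matrix.dotProduct_mulVec, dotProduct_comm]
    rw [← Matrix.mulVec_transpose]
    congr 1
    rw [← Matrix.kroneckerMap_transpose, Matrix.diagonal_transpose]
  rw [h2, ← dotProduct_add, ← Matrix.add_mulVec, ← Matrix.kronecker_add, hQy]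
  have h3 : RmatN M - LmatN M = Matrix.diagonal (fun j => rlw M j) := by
    unfold RmatN LmatN rlw
    rw [Matrix.diagonal_sub]
  rw [h3, Matrix.diagonal_kronecker_diagonal, dot_diag_sum]

lemma Psaty_eq (px : Fin N → ℝ) (py : Fin M → ℝ) (hpy : ∀ j, 0 < py j) :
    Pmat px py * ((calU N M - calD N M)
        * ((1 : Matrix (Fin N) (Fin N) ℝ) ⊗ₖ (Matrix.diagonal py)⁻¹))
      = Matrix.diagonal (fun k : Fin N × Fin M => px k.1 * rlw M k.2) := by
  have h1 : calU N M - calD N M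
      = Matrix.diagonal (fun k : Fin N × Fin M => rlw M k.2) := by
    unfold calU calD RmatN LmatN rlw
    rw [← Matrix.diagonal_one, Matrix.diagonal_kronecker_diagonal,
      Matrix.diagonal_kronecker_diagonal, Matrix.diagonal_sub,
      Matrix.diagonal_eq_diagonal_iff]
    intro k
    ring
  have h2 : (1 : Matrix (Fin N) (Fin N) ℝ) ⊗ₖ (Matrix.diagonal py)⁻¹
      = Matrix.diagonal (fun k : Fin N × Fin M => (py k.2)⁻¹) := by
    rw [diag_inv_eq py hpy, ← Matrix.diagonal_one, Matrix.diagonal_kronecker_diagonal]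
    rw [Matrix.diagonal_eq_diagonal_iff]
    intro k
    rw [one_mul]
  rw [h1, h2, Pmat_eq, Matrix.diagonal_mul_diagonal, Matrix.diagonal_mul_diagonal,
    Matrix.diagonal_eq_diagonal_iff]
  intro k
  have := (hpy k.2).ne'
  field_simp
  
lemma Psatx_eq (px : Fin N → ℝ) (hpx : ∀ i, 0 < px i) (py : Fin M → ℝ) :
    Pmat px py * ((calR N M - calL N M)
        * ((Matrix.diagonal px)⁻¹ ⊗ₖ (1 : Matrix (Fin M) (Fin M) ℝ)))
      = Matrix.diagonal (fun k : Fin N × Fin M => py k.2 * rlw N k.1) := by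
  have h1 : calR N M - calL N M
      = Matrix.diagonal (fun k : Fin N × Fin M => rlw N k.1) := by
    unfold calR calL RmatN LmatN rlw
    rw [← Matrix.diagonal_one, Matrix.diagonal_kronecker_diagonal,
      Matrix.diagonal_kronecker_diagonal, Matrix.diagonal_sub,
      Matrix.diagonal_eq_diagonal_iff]
    intro k
    ring
  have h2 : (Matrix.diagonal px)⁻¹ ⊗ₖ (1 : Matrix (Fin M) (Fin M) ℝ)
      = Matrix.diagonal (fun k : Fin N × Fin M => (px k.1)⁻¹) := by
    rw [diag_inv_eq px hpx, ← Matrix.diagonal_one, Matrix.diagonal_kronecker_diagonal]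
    rw [Matrix.diagonal_eq_diagonal_iff]
    intro k
    rw [mul_one]
  rw [h1, h2, Pmat_eq, Matrix.diagonal_mul_diagonal, Matrix.diagonal_mul_diagonal,
    Matrix.diagonal_eq_diagonal_iff]
  intro k
  have := (hpx k.1).ne'
  field_simp

lemma PBmat_eq (px : Fin N → ℝ) (hpx : ∀ i, 0 < px i)
    (py : Fin M → ℝ) (hpy : ∀ j, 0 < py j) (sL sR sD sU : Grid N M) :
    Pmat px py * Bmat px py sL sR sD sU
      = Matrix.diagonal (fun k : Fin N × Fin M =>
          py k.2 * (sL k * (if (k.1 : ℕ) = 0 then 1 else 0)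
            + sR k * (if (k.1 : ℕ) = N - 1 then 1 else 0))
          + px k.1 * (sD k * (if (k.2 : ℕ) = 0 then 1 else 0)
            + sU k * (if (k.2 : ℕ) = M - 1 then 1 else 0))) := by
  have hL : calL N M = Matrix.diagonal
      (fun k : Fin N × Fin M => if (k.1 : ℕ) = 0 then (1:ℝ) else 0) := by
    unfold calL LmatN
    rw [← Matrix.diagonal_one, Matrix.diagonal_kronecker_diagonal]
    rw [Matrix.diagonal_eq_diagonal_iff]
    intro k
    rw [mul_one]
  have hR : calR N M = Matrix.diagonal
      (fun k : Fin N × Fin M => if (k.1 : ℕ) = N - 1 then (1:ℝ) else 0) := by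
    unfold calR RmatN
    rw [← Matrix.diagonal_one, Matrix.diagonal_kronecker_diagonal]
    rw [Matrix.diagonal_eq_diagonal_iff]
    intro k
    rw [mul_one]
  have hD : calD N M = Matrix.diagonal
      (fun k : Fin N × Fin M => if (k.2 : ℕ) = 0 then (1:ℝ) else 0) := by
    unfold calD LmatN
    rw [← Matrix.diagonal_one, Matrix.diagonal_kronecker_diagonal]
    rw [Matrix.diagonal_eq_diagonal_iff]
    intro k
    rw [one_mul]
  have hU : calU N M = Matrix.diagonal
      (fun k : Fin N × Fin M => if (k.2 : ℕ) = M - 1 then (1:ℝ) else 0) := by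
    unfold calU RmatN
    rw [← Matrix.diagonal_one, Matrix.diagonal_kronecker_diagonal]
    rw [Matrix.diagonal_eq_diagonal_iff]
    intro k
    rw [one_mul]
  have hpxi : (Matrix.diagonal px)⁻¹ ⊗ₖ (1 : Matrix (Fin M) (Fin M) ℝ)
      = Matrix.diagonal (fun k : Fin N × Fin M => (px k.1)⁻¹) := by
    rw [diag_inv_eq px hpx, ← Matrix.diagonal_one, Matrix.diagonal_kronecker_diagonal]
    rw [Matrix.diagonal_eq_diagonal_iff]
    intro k
    rw [mul_one]
  have hpyi : (1 : Matrix (Fin N) (Fin N) ℝ) ⊗ₖ (Matrix.diagonal py)⁻¹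
      = Matrix.diagonal (fun k : Fin N × Fin M => (py k.2)⁻¹) := by
    rw [diag_inv_eq py hpy, ← Matrix.diagonal_one, Matrix.diagonal_kronecker_diagonal]
    rw [Matrix.diagonal_eq_diagonal_iff]
    intro k
    rw [one_mul]
  unfold Bmat
  rw [hL, hR, hD, hU, hpxi, hpyi, Pmat_eq]
  simp only [Matrix.diagonal_mul_diagonal, Matrix.diagonal_add, Matrix.mul_add,
    Matrix.add_mul]
  rw [Matrix.diagonal_eq_diagonal_iff]
  intro k
  have h1 := (hpx k.1).ne'
  have h2 := (hpy k.2).ne'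
  split_ifs <;> field_simp <;> ring

lemma dgx_dgy_comm (px : Fin N → ℝ) (py : Fin M → ℝ)
    (Qx : Matrix (Fin N) (Fin N) ℝ) (Qy : Matrix (Fin M) (Fin M) ℝ) :
    dgx px Qx * dgy py Qy = dgy py Qy * dgx px Qx := by
  unfold dgx dgy
  rw [← Matrix.mul_kronecker_mul, ← Matrix.mul_kronecker_mul,
    Matrix.mul_one, Matrix.one_mul, Matrix.mul_one, Matrix.one_mul]

end AuxLemmas2

section KeyIneq

variable {N M : ℕ}

lemma ip_self_nonneg (px : Fin N → ℝ) (hpx : ∀ i, 0 < px i)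
    (py : Fin M → ℝ) (hpy : ∀ j, 0 < py j) (v : Grid N M) :
    0 ≤ ip px py v v := by
  rw [ip_sum]
  refine Finset.sum_nonneg fun k _ => ?_
  exact mul_nonneg (mul_pos (hpx k.1) (hpy k.2)).le (mul_self_nonneg _)

lemma key_ineq (hN : 2 ≤ N) (hM : 2 ≤ M)
    (px : Fin N → ℝ) (hpx : ∀ i, 0 < px i)
    (py : Fin M → ℝ) (hpy : ∀ j, 0 < py j)
    (Qx : Matrix (Fin N) (Fin N) ℝ) (hQx : Qx + Qxᵀ = RmatN N - LmatN N)
    (Qy : Matrix (Fin M) (Fin M) ℝ) (hQy : Qy + Qyᵀ = RmatN M - LmatN M)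
    (u1 u2 : Grid N M) (ε : ℝ) (hε : 0 < ε) (c : ℝ) (hc : 0 ≤ c)
    (hcomm1 : ∀ W : VGrid N M,
      |vip px py
        (fun k => u1 k * (dgx px Qx).mulVec W.1 k
            - (dgx px Qx).mulVec (fun l => u1 l * W.1 l) k,
         fun k => u1 k * (dgx px Qx).mulVec W.2 k
            - (dgx px Qx).mulVec (fun l => u1 l * W.2 l) k) W|
        ≤ c * vip px py W W)
    (hcomm2 : ∀ W : VGrid N M,
      |vip px py
        (fun k => u2 k * (dgy py Qy).mulVec W.1 k
            - (dgy py Qy).mulVec (fun l => u2 l * W.1 l) k,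
         fun k => u2 k * (dgy py Qy).mulVec W.2 k
            - (dgy py Qy).mulVec (fun l => u2 l * W.2 l) k) W|
        ≤ c * vip px py W W)
    (hcommC : ∀ W : VGrid N M,
      |vip px py W (Cop px py Qx Qy u1 u2 W)| ≤ c * vip px py W W)
    (sL sR sD sU : Grid N M)
    (hsR : ∀ j : Fin M, sR (⟨N - 1, Nat.sub_lt (lt_of_lt_of_le two_pos hN) Nat.one_pos⟩, j) ≤ min (u1 (⟨N - 1, Nat.sub_lt (lt_of_lt_of_le two_pos hN) Nat.one_pos⟩, j)) 0 / 2)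
    (hsL : ∀ j : Fin M, sL (⟨0, (lt_of_lt_of_le two_pos hN)⟩, j) ≤ -(max (u1 (⟨0, (lt_of_lt_of_le two_pos hN)⟩, j)) 0) / 2)
    (hsU : ∀ i : Fin N, sU (i, ⟨M - 1, Nat.sub_lt (lt_of_lt_of_le two_pos hM) Nat.one_pos⟩) ≤ min (u2 (i, ⟨M - 1, Nat.sub_lt (lt_of_lt_of_le two_pos hM) Nat.one_pos⟩)) 0 / 2)
    (hsD : ∀ i : Fin N, sD (i, ⟨0, (lt_of_lt_of_le two_pos hM)⟩) ≤ -(max (u2 (i, ⟨0, (lt_of_lt_of_le two_pos hM)⟩)) 0) / 2)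
    (W : VGrid N M) :
    2 * vip px py W (rhsMixed px py Qx Qy u1 u2 ε sL sR sD sU W)
      ≤ 4 * c * vip px py W W
        - ε * ip px py (curlOp px py Qx Qy W) (curlOp px py Qx Qy W) := by
  have hc1 : (curl2Op px py Qx Qy W).1
      = (dgy py Qy).mulVec (curlOp px py Qx Qy W) := by
    show -(dgy py Qy).mulVec ((dgy py Qy).mulVec W.1)
        + (dgx px Qx).mulVec ((dgy py Qy).mulVec W.2) = _
    unfold curlOp
    rw [Matrix.mulVec_sub, Matrix.mulVec_mulVec, Matrix.mulVec_mulVec,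
      Matrix.mulVec_mulVec, ← dgx_dgy_comm]
    abel
  have hc2 : (curl2Op px py Qx Qy W).2
      = -(dgx px Qx).mulVec (curlOp px py Qx Qy W) := by
    show (dgx px Qx).mulVec ((dgy py Qy).mulVec W.1)
        - (dgx px Qx).mulVec ((dgx px Qx).mulVec W.2) = _
    unfold curlOp
    rw [Matrix.mulVec_sub]
    abel
  -- expansion of the quadratic form
  have hexp : 2 * vip px py W (rhsMixed px py Qx Qy u1 u2 ε sL sR sD sU W)
      = -(2 * ip px py W.1 (fun k => u1 k * (dgx px Qx).mulVec W.1 k))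
        - 2 * ip px py W.1 (fun k => u2 k * (dgy py Qy).mulVec W.1 k)
        - 2 * ip px py W.2 (fun k => u1 k * (dgx px Qx).mulVec W.2 k)
        - 2 * ip px py W.2 (fun k => u2 k * (dgy py Qy).mulVec W.2 k)
        + 2 * vip px py W (Cop px py Qx Qy u1 u2 W)
        - 2 * ε * ip px py W.1 ((dgy py Qy).mulVec (curlOp px py Qx Qy W))
        + 2 * ε * ip px py W.2 ((dgx px Qx).mulVec (curlOp px py Qx Qy W))
        + 2 * ip px py W.1 ((Bmat px py sL sR sD sU).mulVec W.1)
        + 2 * ip px py W.2 ((Bmat px py sL sR sD sU).mulVec W.2)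
        + 2 * ε * ip px py W.1 (((calU N M - calD N M)
              * ((1 : Matrix (Fin N) (Fin N) ℝ) ⊗ₖ (Matrix.diagonal py)⁻¹)).mulVec
              (curlOp px py Qx Qy W))
        - 2 * ε * ip px py W.2 (((calR N M - calL N M)
              * ((Matrix.diagonal px)⁻¹ ⊗ₖ (1 : Matrix (Fin M) (Fin M) ℝ))).mulVec
              (curlOp px py Qx Qy W)) := by
    simp only [vip, rhsMixed, hc1, hc2, Pi.neg_apply, ip_sum, Finset.mul_sum,
      ← Finset.sum_neg_distrib, ← Finset.sum_add_distrib, ← Finset.sum_sub_distrib]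
    refine Finset.sum_congr rfl fun k _ => ?_
    ring
  -- advection identities via SBP
  have hadv1a : 2 * ip px py W.1 (fun k => u1 k * (dgx px Qx).mulVec W.1 k)
      = ip px py (fun k => u1 k * (dgx px Qx).mulVec W.1 k
            - (dgx px Qx).mulVec (fun l => u1 l * W.1 l) k) W.1
        + ∑ k : Fin N × Fin M, py k.2 * rlw N k.1 * (u1 k * W.1 k * W.1 k) := by
    have hs := sbp_x px hpx py Qx hQx (fun l => u1 l * W.1 l) W.1
    rw [show (∑ k : Fin N × Fin M, py k.2 * rlw N k.1 * (u1 k * W.1 k * W.1 k))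
        = ∑ k : Fin N × Fin M, py k.2 * rlw N k.1
            * ((fun l => u1 l * W.1 l) k * W.1 k) from
      Finset.sum_congr rfl fun k _ => by ring, ← hs]
    simp only [ip_sum, Finset.mul_sum, ← Finset.sum_add_distrib]
    exact Finset.sum_congr rfl fun k _ => by ring
  have hadv1b : 2 * ip px py W.2 (fun k => u1 k * (dgx px Qx).mulVec W.2 k)
      = ip px py (fun k => u1 k * (dgx px Qx).mulVec W.2 k
            - (dgx px Qx).mulVec (fun l => u1 l * W.2 l) k) W.2
        + ∑ k : Fin N × Fin M, py k.2 * rlw N k.1 * (u1 k * W.2 k * W.2 k) := by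
    have hs := sbp_x px hpx py Qx hQx (fun l => u1 l * W.2 l) W.2
    rw [show (∑ k : Fin N × Fin M, py k.2 * rlw N k.1 * (u1 k * W.2 k * W.2 k))
        = ∑ k : Fin N × Fin M, py k.2 * rlw N k.1
            * ((fun l => u1 l * W.2 l) k * W.2 k) from
      Finset.sum_congr rfl fun k _ => by ring, ← hs]
    simp only [ip_sum, Finset.mul_sum, ← Finset.sum_add_distrib]
    exact Finset.sum_congr rfl fun k _ => by ring
  have hadv2a : 2 * ip px py W.1 (fun k => u2 k * (dgy py Qy).mulVec W.1 k)
      = ip px py (fun k => u2 k * (dgy py Qy).mulVec W.1 k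
            - (dgy py Qy).mulVec (fun l => u2 l * W.1 l) k) W.1
        + ∑ k : Fin N × Fin M, px k.1 * rlw M k.2 * (u2 k * W.1 k * W.1 k) := by
    have hs := sbp_y px py hpy Qy hQy (fun l => u2 l * W.1 l) W.1
    rw [show (∑ k : Fin N × Fin M, px k.1 * rlw M k.2 * (u2 k * W.1 k * W.1 k))
        = ∑ k : Fin N × Fin M, px k.1 * rlw M k.2
            * ((fun l => u2 l * W.1 l) k * W.1 k) from
      Finset.sum_congr rfl fun k _ => by ring, ← hs]
    simp only [ip_sum, Finset.mul_sum, ← Finset.sum_add_distrib]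
    exact Finset.sum_congr rfl fun k _ => by ring
  have hadv2b : 2 * ip px py W.2 (fun k => u2 k * (dgy py Qy).mulVec W.2 k)
      = ip px py (fun k => u2 k * (dgy py Qy).mulVec W.2 k
            - (dgy py Qy).mulVec (fun l => u2 l * W.2 l) k) W.2
        + ∑ k : Fin N × Fin M, px k.1 * rlw M k.2 * (u2 k * W.2 k * W.2 k) := by
    have hs := sbp_y px py hpy Qy hQy (fun l => u2 l * W.2 l) W.2
    rw [show (∑ k : Fin N × Fin M, px k.1 * rlw M k.2 * (u2 k * W.2 k * W.2 k))
        = ∑ k : Fin N × Fin M, px k.1 * rlw M k.2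
            * ((fun l => u2 l * W.2 l) k * W.2 k) from
      Finset.sum_congr rfl fun k _ => by ring, ← hs]
    simp only [ip_sum, Finset.mul_sum, ← Finset.sum_add_distrib]
    exact Finset.sum_congr rfl fun k _ => by ring
  -- diffusion SBP
  have hdiff1 : ip px py W.1 ((dgy py Qy).mulVec (curlOp px py Qx Qy W))
        + ip px py (curlOp px py Qx Qy W) ((dgy py Qy).mulVec W.1)
      = ∑ k : Fin N × Fin M, px k.1 * rlw M k.2
          * (W.1 k * curlOp px py Qx Qy W k) :=
    sbp_y px py hpy Qy hQy W.1 (curlOp px py Qx Qy W)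
  have hdiff2 : ip px py W.2 ((dgx px Qx).mulVec (curlOp px py Qx Qy W))
        + ip px py (curlOp px py Qx Qy W) ((dgx px Qx).mulVec W.2)
      = ∑ k : Fin N × Fin M, py k.2 * rlw N k.1
          * (W.2 k * curlOp px py Qx Qy W k) :=
    sbp_x px hpx py Qx hQx W.2 (curlOp px py Qx Qy W)
  have hphi : ip px py (curlOp px py Qx Qy W) ((dgx px Qx).mulVec W.2)
        - ip px py (curlOp px py Qx Qy W) ((dgy py Qy).mulVec W.1)
      = ip px py (curlOp px py Qx Qy W) (curlOp px py Qx Qy W) := by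
    simp only [ip_sum, ← Finset.sum_sub_distrib]
    refine Finset.sum_congr rfl fun k _ => ?_
    simp only [curlOp, Pi.sub_apply]
    ring
  -- SAT boundary terms
  have hsat1 : ip px py W.1 (((calU N M - calD N M)
        * ((1 : Matrix (Fin N) (Fin N) ℝ) ⊗ₖ (Matrix.diagonal py)⁻¹)).mulVec
        (curlOp px py Qx Qy W))
      = ∑ k : Fin N × Fin M, px k.1 * rlw M k.2
          * (W.1 k * curlOp px py Qx Qy W k) := by
    rw [ip_mulVec, Psaty_eq px py hpy, dot_diag_sum]
  have hsat2 : ip px py W.2 (((calR N M - calL N M)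
        * ((Matrix.diagonal px)⁻¹ ⊗ₖ (1 : Matrix (Fin M) (Fin M) ℝ))).mulVec
        (curlOp px py Qx Qy W))
      = ∑ k : Fin N × Fin M, py k.2 * rlw N k.1
          * (W.2 k * curlOp px py Qx Qy W k) := by
    rw [ip_mulVec, Psatx_eq px hpx py, dot_diag_sum]
  -- penalty terms
  have hpen1 : ip px py W.1 ((Bmat px py sL sR sD sU).mulVec W.1)
      = ∑ k : Fin N × Fin M,
          (py k.2 * (sL k * (if (k.1 : ℕ) = 0 then 1 else 0)
              + sR k * (if (k.1 : ℕ) = N - 1 then 1 else 0))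
            + px k.1 * (sD k * (if (k.2 : ℕ) = 0 then 1 else 0)
              + sU k * (if (k.2 : ℕ) = M - 1 then 1 else 0))) * (W.1 k * W.1 k) := by
    rw [ip_mulVec, PBmat_eq px hpx py hpy, dot_diag_sum]
  have hpen2 : ip px py W.2 ((Bmat px py sL sR sD sU).mulVec W.2)
      = ∑ k : Fin N × Fin M,
          (py k.2 * (sL k * (if (k.1 : ℕ) = 0 then 1 else 0)
              + sR k * (if (k.1 : ℕ) = N - 1 then 1 else 0))
            + px k.1 * (sD k * (if (k.2 : ℕ) = 0 then 1 else 0)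
              + sU k * (if (k.2 : ℕ) = M - 1 then 1 else 0))) * (W.2 k * W.2 k) := by
    rw [ip_mulVec, PBmat_eq px hpx py hpy, dot_diag_sum]
  -- the combined boundary sum
  have hbsum : -(∑ k : Fin N × Fin M, py k.2 * rlw N k.1 * (u1 k * W.1 k * W.1 k))
        - (∑ k : Fin N × Fin M, py k.2 * rlw N k.1 * (u1 k * W.2 k * W.2 k))
        - (∑ k : Fin N × Fin M, px k.1 * rlw M k.2 * (u2 k * W.1 k * W.1 k))
        - (∑ k : Fin N × Fin M, px k.1 * rlw M k.2 * (u2 k * W.2 k * W.2 k))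
        + 2 * (∑ k : Fin N × Fin M,
          (py k.2 * (sL k * (if (k.1 : ℕ) = 0 then 1 else 0)
              + sR k * (if (k.1 : ℕ) = N - 1 then 1 else 0))
            + px k.1 * (sD k * (if (k.2 : ℕ) = 0 then 1 else 0)
              + sU k * (if (k.2 : ℕ) = M - 1 then 1 else 0))) * (W.1 k * W.1 k))
        + 2 * (∑ k : Fin N × Fin M,
          (py k.2 * (sL k * (if (k.1 : ℕ) = 0 then 1 else 0)
              + sR k * (if (k.1 : ℕ) = N - 1 then 1 else 0))
            + px k.1 * (sD k * (if (k.2 : ℕ) = 0 then 1 else 0)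
              + sU k * (if (k.2 : ℕ) = M - 1 then 1 else 0))) * (W.2 k * W.2 k))
      = ∑ k : Fin N × Fin M,
          (py k.2 * ((if (k.1 : ℕ) = N - 1 then 1 else 0) * (2 * sR k - u1 k)
              + (if (k.1 : ℕ) = 0 then 1 else 0) * (2 * sL k + u1 k))
            + px k.1 * ((if (k.2 : ℕ) = M - 1 then 1 else 0) * (2 * sU k - u2 k)
              + (if (k.2 : ℕ) = 0 then 1 else 0) * (2 * sD k + u2 k)))
            * (W.1 k * W.1 k + W.2 k * W.2 k) := by
    simp only [rlw, Finset.mul_sum, ← Finset.sum_neg_distrib, ← Finset.sum_add_distrib,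
      ← Finset.sum_sub_distrib]
    refine Finset.sum_congr rfl fun k _ => ?_
    ring
  -- sign of the boundary sum
  have hbnd : (∑ k : Fin N × Fin M,
          (py k.2 * ((if (k.1 : ℕ) = N - 1 then 1 else 0) * (2 * sR k - u1 k)
              + (if (k.1 : ℕ) = 0 then 1 else 0) * (2 * sL k + u1 k))
            + px k.1 * ((if (k.2 : ℕ) = M - 1 then 1 else 0) * (2 * sU k - u2 k)
              + (if (k.2 : ℕ) = 0 then 1 else 0) * (2 * sD k + u2 k)))
            * (W.1 k * W.1 k + W.2 k * W.2 k)) ≤ 0 := by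
    refine Finset.sum_nonpos fun k _ => ?_
    obtain ⟨i, j⟩ := k
    have hsq : 0 ≤ W.1 (i, j) * W.1 (i, j) + W.2 (i, j) * W.2 (i, j) :=
      add_nonneg (mul_self_nonneg _) (mul_self_nonneg _)
    refine mul_nonpos_of_nonpos_of_nonneg ?_ hsq
    have t1 : (if (i : ℕ) = N - 1 then (1:ℝ) else 0) * (2 * sR (i, j) - u1 (i, j)) ≤ 0 := by
      by_cases h : (i : ℕ) = N - 1
      · have this' := hsR j
        rw [show (⟨N - 1, by omega⟩ : Fin N) = i from Fin.ext h.symm] at this'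
        have hm : min (u1 (i, j)) 0 ≤ u1 (i, j) := min_le_left _ _
        simp only [if_pos h, one_mul]
        linarith
      · simp [h]
    have t2 : (if (i : ℕ) = 0 then (1:ℝ) else 0) * (2 * sL (i, j) + u1 (i, j)) ≤ 0 := by
      by_cases h : (i : ℕ) = 0
      · have this' := hsL j
        rw [show (⟨0, by omega⟩ : Fin N) = i from Fin.ext h.symm] at this'
        have hm : u1 (i, j) ≤ max (u1 (i, j)) 0 := le_max_left _ _
        simp only [if_pos h, one_mul]
        linarith
      · simp [h]
    have t3 : (if (j : ℕ) = M - 1 then (1:ℝ) else 0) * (2 * sU (i, j) - u2 (i, j)) ≤ 0 := by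
      by_cases h : (j : ℕ) = M - 1
      · have this' := hsU i
        rw [show (⟨M - 1, by omega⟩ : Fin M) = j from Fin.ext h.symm] at this'
        have hm : min (u2 (i, j)) 0 ≤ u2 (i, j) := min_le_left _ _
        simp only [if_pos h, one_mul]
        linarith
      · simp [h]
    have t4 : (if (j : ℕ) = 0 then (1:ℝ) else 0) * (2 * sD (i, j) + u2 (i, j)) ≤ 0 := by
      by_cases h : (j : ℕ) = 0
      · have this' := hsD i
        rw [show (⟨0, by omega⟩ : Fin M) = j from Fin.ext h.symm] at this'
        have hm : u2 (i, j) ≤ max (u2 (i, j)) 0 := le_max_left _ _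
        simp only [if_pos h, one_mul]
        linarith
      · simp [h]
    have hpyj := (hpy j).le
    have hpxi := (hpx i).le
    have := mul_nonpos_of_nonneg_of_nonpos hpyj (add_nonpos t1 t2)
    have := mul_nonpos_of_nonneg_of_nonpos hpxi (add_nonpos t3 t4)
    linarith
  -- commutator and C bounds
  have hb1 := abs_le.mp (hcomm1 W)
  have hb2 := abs_le.mp (hcomm2 W)
  have hbC := abs_le.mp (hcommC W)
  have hphinn : 0 ≤ ip px py (curlOp px py Qx Qy W) (curlOp px py Qx Qy W) :=
    ip_self_nonneg px hpx py hpy _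
  have hεφ : 0 ≤ ε * ip px py (curlOp px py Qx Qy W) (curlOp px py Qx Qy W) :=
    mul_nonneg hε.le hphinn
  -- the main identity
  have main : 2 * vip px py W (rhsMixed px py Qx Qy u1 u2 ε sL sR sD sU W)
      = -(vip px py
          (fun k => u1 k * (dgx px Qx).mulVec W.1 k
              - (dgx px Qx).mulVec (fun l => u1 l * W.1 l) k,
           fun k => u1 k * (dgx px Qx).mulVec W.2 k
              - (dgx px Qx).mulVec (fun l => u1 l * W.2 l) k) W)
        - vip px py
          (fun k => u2 k * (dgy py Qy).mulVec W.1 k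
              - (dgy py Qy).mulVec (fun l => u2 l * W.1 l) k,
           fun k => u2 k * (dgy py Qy).mulVec W.2 k
              - (dgy py Qy).mulVec (fun l => u2 l * W.2 l) k) W
        + 2 * vip px py W (Cop px py Qx Qy u1 u2 W)
        - 2 * ε * ip px py (curlOp px py Qx Qy W) (curlOp px py Qx Qy W)
        + ∑ k : Fin N × Fin M,
          (py k.2 * ((if (k.1 : ℕ) = N - 1 then 1 else 0) * (2 * sR k - u1 k)
              + (if (k.1 : ℕ) = 0 then 1 else 0) * (2 * sL k + u1 k))
            + px k.1 * ((if (k.2 : ℕ) = M - 1 then 1 else 0) * (2 * sU k - u2 k)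
              + (if (k.2 : ℕ) = 0 then 1 else 0) * (2 * sD k + u2 k)))
            * (W.1 k * W.1 k + W.2 k * W.2 k) := by
    simp only [vip] at hexp ⊢
    linear_combination hexp - hadv1a - hadv2a - hadv1b - hadv2b
      - 2 * ε * hdiff1 + 2 * ε * hdiff2 - 2 * ε * hphi
      + 2 * ε * hsat1 - 2 * ε * hsat2 + 2 * hpen1 + 2 * hpen2 + hbsum
  rw [main]
  simp only [vip] at hb1 hb2 hbC ⊢
  linarith
end KeyIneq

/-- Energy stability of the SBP-SAT scheme for the resistive induction equation
with mixed boundary conditions (Theorem `mixedtype`):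
`‖V(t)‖_𝐏² + ε ∫₀ᵗ e^{4c(t−s)} ‖curl(V(s))‖_𝐏² ds ≤ e^{4ct} ‖V(0)‖_𝐏²`. -/
theorem stmt8 (N M : ℕ) (hN : 2 ≤ N) (hM : 2 ≤ M)
    (px : Fin N → ℝ) (hpx : ∀ i, 0 < px i)
    (py : Fin M → ℝ) (hpy : ∀ j, 0 < py j)
    (Qx : Matrix (Fin N) (Fin N) ℝ) (hQx : Qx + Qxᵀ = RmatN N - LmatN N)
    (Qy : Matrix (Fin M) (Fin M) ℝ) (hQy : Qy + Qyᵀ = RmatN M - LmatN M)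
    (u1 u2 : Grid N M) (ε : ℝ) (hε : 0 < ε) (c : ℝ) (hc : 0 ≤ c)
    (hcomm1 : ∀ W : VGrid N M,
      |vip px py
        (fun k => u1 k * (dgx px Qx).mulVec W.1 k
            - (dgx px Qx).mulVec (fun l => u1 l * W.1 l) k,
         fun k => u1 k * (dgx px Qx).mulVec W.2 k
            - (dgx px Qx).mulVec (fun l => u1 l * W.2 l) k) W|
        ≤ c * vip px py W W)
    (hcomm2 : ∀ W : VGrid N M,
      |vip px py
        (fun k => u2 k * (dgy py Qy).mulVec W.1 k
            - (dgy py Qy).mulVec (fun l => u2 l * W.1 l) k,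
         fun k => u2 k * (dgy py Qy).mulVec W.2 k
            - (dgy py Qy).mulVec (fun l => u2 l * W.2 l) k) W|
        ≤ c * vip px py W W)
    (hcommC : ∀ W : VGrid N M,
      |vip px py W (Cop px py Qx Qy u1 u2 W)| ≤ c * vip px py W W)
    (sL sR sD sU : Grid N M)
    (hsR : ∀ j : Fin M, sR (⟨N - 1, by omega⟩, j) ≤ min (u1 (⟨N - 1, by omega⟩, j)) 0 / 2)
    (hsL : ∀ j : Fin M, sL (⟨0, by omega⟩, j) ≤ -(max (u1 (⟨0, by omega⟩, j)) 0) / 2)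
    (hsU : ∀ i : Fin N, sU (i, ⟨M - 1, by omega⟩) ≤ min (u2 (i, ⟨M - 1, by omega⟩)) 0 / 2)
    (hsD : ∀ i : Fin N, sD (i, ⟨0, by omega⟩) ≤ -(max (u2 (i, ⟨0, by omega⟩)) 0) / 2)
    (hzero : ∀ k : Fin N × Fin M,
      ((k.1 : ℕ) ≠ N - 1 → sR k = 0) ∧ ((k.1 : ℕ) ≠ 0 → sL k = 0) ∧
      ((k.2 : ℕ) ≠ M - 1 → sU k = 0) ∧ ((k.2 : ℕ) ≠ 0 → sD k = 0))
    (V : ℝ → VGrid N M)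
    (hV : ∀ t : ℝ, 0 ≤ t →
      HasDerivAt V (rhsMixed px py Qx Qy u1 u2 ε sL sR sD sU (V t)) t) :
    ∀ t : ℝ, 0 ≤ t →
      vip px py (V t) (V t)
        + ε * ∫ s in (0:ℝ)..t, Real.exp (4 * c * (t - s)) *
            ip px py (curlOp px py Qx Qy (V s)) (curlOp px py Qx Qy (V s))
      ≤ Real.exp (4 * c * t) * vip px py (V 0) (V 0) := by
  
  have hcurlC : Continuous (fun Wv : VGrid N M => curlOp px py Qx Qy Wv) := by
    unfold curlOp
    exact (continuous_const.matrix_mulVec continuous_snd).sub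
      (continuous_const.matrix_mulVec continuous_fst)
  have hipC : Continuous (fun v : Grid N M => ip px py v v) := by
    unfold ip
    exact continuous_id.dotProduct (continuous_const.matrix_mulVec continuous_id)
  have hvipC : Continuous (fun Wv : VGrid N M => vip px py Wv Wv) := by
    unfold vip ip
    exact (continuous_fst.dotProduct
        (continuous_const.matrix_mulVec continuous_fst)).add
      (continuous_snd.dotProduct (continuous_const.matrix_mulVec continuous_snd))
  have hexpC : Continuous fun s : ℝ => Real.exp (-(4*c*s)) :=
    Real.continuous_exp.comp ((continuous_const.mul continuous_id).neg)
  set K : ℝ → ℝ := fun s =>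
    ip px py (curlOp px py Qx Qy (V s)) (curlOp px py Qx Qy (V s)) with hKdef
  set f : ℝ → ℝ := fun s => Real.exp (-(4*c*s)) * K s with hfdef
  set E : ℝ → ℝ := fun s => vip px py (V s) (V s) with hEdef
  have hVca : ∀ s : ℝ, 0 ≤ s → ContinuousAt V s := fun s hs => (hV s hs).continuousAt
  have hKca : ∀ s : ℝ, 0 ≤ s → ContinuousAt K s := fun s hs =>
    ((hipC.comp hcurlC).continuousAt).comp (hVca s hs)
  have hEca : ∀ s : ℝ, 0 ≤ s → ContinuousAt E s := fun s hs =>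
    hvipC.continuousAt.comp (hVca s hs)
  have hfca : ∀ s : ℝ, 0 ≤ s → ContinuousAt f s := fun s hs =>
    hexpC.continuousAt.mul (hKca s hs)
  have hfContOn : ContinuousOn f (Set.Ici (0:ℝ)) := fun s hs =>
    (hfca s hs).continuousWithinAt
  -- derivative of the energy
  have hEd : ∀ s : ℝ, 0 ≤ s → HasDerivAt E
      (2 * vip px py (V s) (rhsMixed px py Qx Qy u1 u2 ε sL sR sD sU (V s))) s := by
    intro s hs
    have h1 : ∀ k, HasDerivAt (fun τ => (V τ).1 k)
        ((rhsMixed px py Qx Qy u1 u2 ε sL sR sD sU (V s)).1 k) s := by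
      intro k
      have hfst : HasDerivAt (fun τ => (V τ).1)
          ((rhsMixed px py Qx Qy u1 u2 ε sL sR sD sU (V s)).1) s :=
        (ContinuousLinearMap.fst ℝ (Grid N M) (Grid N M)).hasFDerivAt.comp_hasDerivAt
          s (hV s hs)
      exact hasDerivAt_pi.mp hfst k
    have h2 : ∀ k, HasDerivAt (fun τ => (V τ).2 k)
        ((rhsMixed px py Qx Qy u1 u2 ε sL sR sD sU (V s)).2 k) s := by
      intro k
      have hsnd : HasDerivAt (fun τ => (V τ).2)
          ((rhsMixed px py Qx Qy u1 u2 ε sL sR sD sU (V s)).2) s :=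
        (ContinuousLinearMap.snd ℝ (Grid N M) (Grid N M)).hasFDerivAt.comp_hasDerivAt
          s (hV s hs)
      exact hasDerivAt_pi.mp hsnd k
    have hfeq : E = fun τ =>
        (∑ k : Fin N × Fin M, px k.1 * py k.2 * ((V τ).1 k * (V τ).1 k))
        + ∑ k : Fin N × Fin M, px k.1 * py k.2 * ((V τ).2 k * (V τ).2 k) := by
      rw [hEdef]
      funext τ
      simp only [vip, ip_sum]
    have hval : 2 * vip px py (V s) (rhsMixed px py Qx Qy u1 u2 ε sL sR sD sU (V s))
        = (∑ k : Fin N × Fin M, px k.1 * py k.2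
            * ((rhsMixed px py Qx Qy u1 u2 ε sL sR sD sU (V s)).1 k * (V s).1 k
              + (V s).1 k * (rhsMixed px py Qx Qy u1 u2 ε sL sR sD sU (V s)).1 k))
          + ∑ k : Fin N × Fin M, px k.1 * py k.2
            * ((rhsMixed px py Qx Qy u1 u2 ε sL sR sD sU (V s)).2 k * (V s).2 k
              + (V s).2 k * (rhsMixed px py Qx Qy u1 u2 ε sL sR sD sU (V s)).2 k) := by
      simp only [vip, ip_sum, Finset.mul_sum, ← Finset.sum_add_distrib]
      refine Finset.sum_congr rfl fun k _ => ?_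
      ring
    rw [hfeq, hval]
    exact (HasDerivAt.fun_sum fun k _ =>
        HasDerivAt.const_mul (px k.1 * py k.2) ((h1 k).mul (h1 k))).add
      (HasDerivAt.fun_sum fun k _ =>
        HasDerivAt.const_mul (px k.1 * py k.2) ((h2 k).mul (h2 k)))
  intro t ht
  rcases eq_or_lt_of_le ht with h0 | h0
  · rw [← h0]
    simp
  · have hIccIci : Set.Icc (0:ℝ) t ⊆ Set.Ici 0 := fun x hx => hx.1
    have hfint : IntervalIntegrable f MeasureTheory.volume 0 t := by
      apply ContinuousOn.intervalIntegrable
      rw [Set.uIcc_of_le ht]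
      exact hfContOn.mono hIccIci
    set G : ℝ → ℝ := fun τ => Real.exp (-(4*c*τ)) * E τ + ε * ∫ s in (0:ℝ)..τ, f s
      with hGdef
    have hGcont : ContinuousOn G (Set.Icc 0 t) := by
      rw [hGdef]
      apply ContinuousOn.add
      · exact hexpC.continuousOn.mul (fun s hs => (hEca s hs.1).continuousWithinAt)
      · refine continuousOn_const.mul ?_
        have hint : MeasureTheory.IntegrableOn f (Set.uIcc (0:ℝ) t) := by
          rw [Set.uIcc_of_le ht]
          exact (hfContOn.mono hIccIci).integrableOn_Icc
        have h := intervalIntegral.continuousOn_primitive_interval hint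
        rw [Set.uIcc_of_le ht] at h
        exact h
    have hGd : ∀ s ∈ Set.Ioo (0:ℝ) t, HasDerivAt G
        (Real.exp (-(4*c*s)) * -(4*c) * E s
          + Real.exp (-(4*c*s))
            * (2 * vip px py (V s) (rhsMixed px py Qx Qy u1 u2 ε sL sR sD sU (V s)))
          + ε * f s) s := by
      intro s hs
      have hse : HasDerivAt (fun τ : ℝ => Real.exp (-(4*c*τ)))
          (Real.exp (-(4*c*s)) * -(4*c)) s := by
        have h0' : HasDerivAt (fun τ : ℝ => -(4*c*τ)) (-(4*c)) s := by
          simpa using ((hasDerivAt_id s).const_mul (4*c)).fun_neg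
        exact h0'.exp
      have hE' := hEd s hs.1.le
      have hI : HasDerivAt (fun τ => ∫ u in (0:ℝ)..τ, f u) (f s) s := by
        apply intervalIntegral.integral_hasDerivAt_right
        · apply ContinuousOn.intervalIntegrable
          rw [Set.uIcc_of_le hs.1.le]
          exact hfContOn.mono (fun x hx => hx.1)
        · exact ContinuousOn.stronglyMeasurableAtFilter isOpen_Ioi
            (hfContOn.mono (fun x (hx : x ∈ Set.Ioi (0:ℝ)) => Set.mem_Ici.mpr (le_of_lt (Set.mem_Ioi.mp hx)))) s hs.1
        · exact hfca s hs.1.le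
      have hcomb := (hse.mul hE').add (hI.const_mul ε)
      rw [hGdef]
      exact hcomb
    have hanti : AntitoneOn G (Set.Icc 0 t) := by
      apply antitoneOn_of_deriv_nonpos (convex_Icc 0 t) hGcont
      · intro x hx
        rw [interior_Icc] at hx
        exact ((hGd x hx).differentiableAt).differentiableWithinAt
      · intro x hx
        rw [interior_Icc] at hx
        rw [(hGd x hx).deriv]
        have hkey := key_ineq hN hM px hpx py hpy Qx hQx Qy hQy u1 u2 ε hε c hc
          hcomm1 hcomm2 hcommC sL sR sD sU hsR hsL hsU hsD (V x)
        have heq : Real.exp (-(4*c*x)) * -(4*c) * E x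
            + Real.exp (-(4*c*x))
              * (2 * vip px py (V x) (rhsMixed px py Qx Qy u1 u2 ε sL sR sD sU (V x)))
            + ε * f x
            = Real.exp (-(4*c*x))
              * (2 * vip px py (V x) (rhsMixed px py Qx Qy u1 u2 ε sL sR sD sU (V x))
                - 4 * c * vip px py (V x) (V x) + ε * K x) := by
          simp only [hEdef, hfdef]
          ring
        rw [heq]
        apply mul_nonpos_of_nonneg_of_nonpos (Real.exp_pos _).le
        simp only [hKdef]
        linarith
    have hGle : G t ≤ G 0 :=
      hanti ⟨le_refl _, ht⟩ ⟨ht, le_refl _⟩ ht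
    have hG0 : G 0 = E 0 := by
      rw [hGdef]
      simp
    have hprod : Real.exp (4*c*t) * Real.exp (-(4*c*t)) = 1 := by
      rw [← Real.exp_add]
      ring_nf
      exact Real.exp_zero
    have hintEq : (∫ s in (0:ℝ)..t, Real.exp (4*c*(t-s)) * K s)
        = Real.exp (4*c*t) * ∫ s in (0:ℝ)..t, f s := by
      rw [← intervalIntegral.integral_const_mul]
      refine intervalIntegral.integral_congr fun s _ => ?_
      simp only [hfdef]
      rw [show 4*c*(t-s) = 4*c*t + -(4*c*s) by ring, Real.exp_add, mul_assoc]
    have hgoal2 : E t + ε * (Real.exp (4*c*t) * ∫ s in (0:ℝ)..t, f s)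
        ≤ Real.exp (4*c*t) * E 0 := by
      have h2 : E t + ε * (Real.exp (4*c*t) * ∫ s in (0:ℝ)..t, f s)
          = Real.exp (4*c*t) * G t := by
        rw [hGdef]
        linear_combination (-(E t)) * hprod
      rw [h2, ← hG0]
      exact mul_le_mul_of_nonneg_left hGle (Real.exp_pos _).le
    rw [← hintEq] at hgoal2
    exact hgoal2
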